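/- For every prime number $p$, the polynomial $(x^2 + 3)(x^3 - 19)$ has a root in the field $\mathbb{Q}_p$ of $p$-adic numbers, and it also has a root in $\mathbb{R}$. -/

import Mathlib

/-!
If `p ≡ 1 (mod 3)`, an element `ω` of order `3` in `(ZMod p)ˣ` gives `(2ω + 1)² = -3`; if
`p ≡ 2 (mod 3)`, cubing is a bijection of `ZMod p`, so `19` is a cube mod `p`. In both cases the
root mod `p` is simple and Hensel's lemma lifts it to `ℤ_[p]`. For `p = 3` the root `7` of
`x³ - 19` mod `3` is not simple, but `7³ - 19 = 3⁴ · 4` is small enough compared with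
`(3 · 7²)²` for the strong form of Hensel's lemma. Over `ℝ`, `19^(1/3)` is a root.
-/

open Polynomial

namespace FiniteField

variable {K : Type*} [Field K] [Fintype K]

theorem exists_sq_eq_neg_three (h : 3 ∣ Fintype.card K - 1) : ∃ w : K, w ^ 2 = -3 := by
  classical
  obtain ⟨ω, hω⟩ := exists_prime_orderOf_dvd_card (G := Kˣ) 3 (by rwa [Fintype.card_units])
  have hω3 : (ω : K) ^ 3 = 1 := by
    rw [← Units.val_pow_eq_pow_val, ← hω, pow_orderOf_eq_one, Units.val_one]
  have hω1 : (ω : K) ≠ 1 := by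
    intro h1
    rw [Units.val_eq_one.1 h1, orderOf_one] at hω
    norm_num at hω
  have hroot : (ω : K) ^ 2 + ω + 1 = 0 := by
    have : ((ω : K) - 1) * ((ω : K) ^ 2 + ω + 1) = 0 := by linear_combination hω3
    exact (mul_eq_zero.1 this).resolve_left (sub_ne_zero.2 hω1)
  exact ⟨2 * ω + 1, by linear_combination 4 * hroot⟩

theorem exists_pow_three_eq (h : Fintype.card K % 3 = 2) (a : K) : ∃ b : K, b ^ 3 = a := by
  have hq := Fintype.card_pos (α := K)
  refine ⟨a ^ ((2 * Fintype.card K - 1) / 3), ?_⟩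
  calc (a ^ ((2 * Fintype.card K - 1) / 3)) ^ 3
      = a ^ (Fintype.card K - 1) * a ^ Fintype.card K := by
        rw [← pow_mul, ← pow_add]; congr 1; omega
    _ = a := by rw [pow_card, ← pow_succ, Nat.sub_add_cancel hq, pow_card]

end FiniteField

theorem ZMod.natCast_ne_zero_of_prime_ne {p q : ℕ} (hp : p.Prime) (hq : q.Prime) (hpq : p ≠ q) :
    (q : ZMod p) ≠ 0 := by
  rw [Ne, ZMod.natCast_eq_zero_iff, Nat.prime_dvd_prime_iff_eq hp hq]
  exact hpq

namespace PadicInt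

variable {p : ℕ} [hp : Fact p.Prime]

theorem exists_pow_eq_of_norm_lt {n : ℕ} {a c : ℤ_[p]}
    (h : ‖a ^ n - c‖ < ‖(n : ℤ_[p]) * a ^ (n - 1)‖ ^ 2) : ∃ x : ℤ_[p], x ^ n = c := by
  obtain ⟨x, hx, -⟩ := hensels_lemma (F := X ^ n - C c) (a := a)
    (by simpa [derivative_X_pow] using h)
  exact ⟨x, by simpa [sub_eq_zero] using hx⟩

theorem norm_lt_one_iff_toZMod_eq_zero {z : ℤ_[p]} : ‖z‖ < 1 ↔ toZMod z = 0 := by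
  rw [← mem_nonunits, ← IsLocalRing.mem_maximalIdeal, ← ker_toZMod, RingHom.mem_ker]

theorem exists_pow_eq_of_toZMod {n : ℕ} {c : ℤ_[p]} {b : ZMod p} (hb : b ^ n = toZMod c)
    (hb0 : b ≠ 0) (hn : (n : ZMod p) ≠ 0) : ∃ x : ℤ_[p], x ^ n = c := by
  set a : ℤ_[p] := (b.val : ℤ_[p])
  have ha : toZMod a = b := by simp [a]
  have hlt : ‖a ^ n - c‖ < 1 := by
    rw [norm_lt_one_iff_toZMod_eq_zero, map_sub, map_pow, ha, hb, sub_self]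
  have hunit : ‖(n : ℤ_[p]) * a ^ (n - 1)‖ = 1 := by
    refine le_antisymm (norm_le_one _) (not_lt.1 fun h => ?_)
    rw [norm_lt_one_iff_toZMod_eq_zero, map_mul, map_natCast, map_pow, ha] at h
    exact mul_ne_zero hn (pow_ne_zero _ hb0) h
  exact exists_pow_eq_of_norm_lt (by rwa [hunit, one_pow])

theorem exists_sq_eq_neg_three (h : p % 3 = 1) : ∃ x : ℤ_[p], x ^ 2 = -3 := by
  have h2 := ZMod.natCast_ne_zero_of_prime_ne hp.out Nat.prime_two (by omega)
  have h3 := ZMod.natCast_ne_zero_of_prime_ne hp.out Nat.prime_three (by omega)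
  push_cast at h2 h3
  obtain ⟨w, hw⟩ := FiniteField.exists_sq_eq_neg_three (K := ZMod p) (by rw [ZMod.card]; omega)
  have hw0 : w ≠ 0 := by
    rintro rfl
    exact h3 (by linear_combination hw)
  exact exists_pow_eq_of_toZMod (b := w) (by rwa [map_neg, map_ofNat]) hw0 (by exact_mod_cast h2)

theorem exists_pow_three_eq_nineteen_of_mod_three_eq_two (h : p % 3 = 2) :
    ∃ x : ℤ_[p], x ^ 3 = 19 := by
  have h3 := ZMod.natCast_ne_zero_of_prime_ne hp.out Nat.prime_three (by omega)
  have h19 := ZMod.natCast_ne_zero_of_prime_ne hp.out (by norm_num : (19 : ℕ).Prime) (by omega)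
  push_cast at h19
  obtain ⟨b, hb⟩ := FiniteField.exists_pow_three_eq (K := ZMod p) (by rwa [ZMod.card]) 19
  have hb0 : b ≠ 0 := by
    rintro rfl
    exact h19 (by simpa using hb.symm)
  exact exists_pow_eq_of_toZMod (b := b) (by rwa [map_ofNat]) hb0 h3

theorem exists_pow_three_eq_nineteen_three_adic : ∃ x : ℤ_[3], x ^ 3 = 19 := by
  refine exists_pow_eq_of_norm_lt (a := 7) ?_
  have h7 : ‖(7 : ℤ_[3])‖ = 1 := by exact_mod_cast norm_natCast_eq_one_iff.2 (by norm_num)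
  have h4 : ‖(4 : ℤ_[3])‖ ≤ 1 := norm_le_one _
  have hsub : (7 : ℤ_[3]) ^ 3 - 19 = ((3 : ℕ) : ℤ_[3]) ^ 4 * 4 := by push_cast; norm_num
  rw [hsub, norm_mul, norm_mul, norm_pow, norm_pow, norm_p, h7]
  norm_num
  linarith

theorem exists_sq_eq_neg_three_or_pow_three_eq_nineteen :
    ∃ x : ℤ_[p], x ^ 2 = -3 ∨ x ^ 3 = 19 := by
  obtain h | h | h : p % 3 = 0 ∨ p % 3 = 1 ∨ p % 3 = 2 := by omega
  · obtain rfl : p = 3 :=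
      ((Nat.prime_dvd_prime_iff_eq Nat.prime_three hp.out).1 (Nat.dvd_of_mod_eq_zero h)).symm
    obtain ⟨x, hx⟩ := exists_pow_three_eq_nineteen_three_adic
    exact ⟨x, .inr hx⟩
  · obtain ⟨x, hx⟩ := exists_sq_eq_neg_three h
    exact ⟨x, .inl hx⟩
  · obtain ⟨x, hx⟩ := exists_pow_three_eq_nineteen_of_mod_three_eq_two h
    exact ⟨x, .inr hx⟩

end PadicInt

/-- For every prime `p`, the polynomial `(x² + 3)(x³ - 19)` has a root in
`ℚ_p`, and it also has a root in `ℝ`. -/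
theorem stmt9 :
    (∀ (p : ℕ) [Fact p.Prime], ∃ x : ℚ_[p], (x ^ 2 + 3) * (x ^ 3 - 19) = 0) ∧
    (∃ x : ℝ, (x ^ 2 + 3) * (x ^ 3 - 19) = 0) := by
  refine ⟨fun p _ => ?_, ?_⟩
  · obtain ⟨x, hx⟩ := PadicInt.exists_sq_eq_neg_three_or_pow_three_eq_nineteen (p := p)
    refine ⟨x, ?_⟩
    rcases hx with hx | hx
    · have hq : (x : ℚ_[p]) ^ 2 = -3 := by exact_mod_cast congrArg ((↑) : ℤ_[p] → ℚ_[p]) hx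
      rw [hq, neg_add_cancel, zero_mul]
    · have hq : (x : ℚ_[p]) ^ 3 = 19 := by exact_mod_cast congrArg ((↑) : ℤ_[p] → ℚ_[p]) hx
      rw [hq, sub_self, mul_zero]
  · refine ⟨19 ^ ((3 : ℕ)⁻¹ : ℝ), ?_⟩
    rw [Real.rpow_inv_natCast_pow (by norm_num) (by norm_num), sub_self, mul_zero]
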